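/- Let ε > 0. Suppose the ideal quadruple satisfies Tr[β̂] = 4(d−1)·D (maximal violation on the maximally mixed state 1/D) and the non-ideal quadruple satisfies Tr[β̂̃] = (4(d−1) − ε)·D. Then ‖ (A_4·A_3† − ω·A_3·A_4†)·(1/D) − (Ã_4·Ã_3† − ω·Ã_3·Ã_4†)·(1/D) ‖_HS ≤ 2·√ε·(2 + √ε), where ‖X‖_HS = √(Tr[X†X]) is the Frobenius (Hilbert–Schmidt) norm and X† is the conjugate transpose. -/

import Mathlib

open Matrix Finset

noncomputable section

set_option maxHeartbeats 1000000
set_option linter.unusedVariables false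

attribute [local instance] Matrix.frobeniusNormedAddCommGroup Matrix.frobeniusNormedRing
  Matrix.frobeniusNormedSpace Matrix.frobeniusIsBoundedSMul

local notation "conj'" => starRingEnd ℂ

private lemma frob_trace_eq {D : ℕ} (M : Matrix (Fin D) (Fin D) ℂ) :
    (Mᴴ * M).trace = ((‖M‖ ^ 2 : ℝ) : ℂ) := by
  have h1 : ‖M‖ ^ 2 = ∑ i, ∑ j, ‖M i j‖ ^ 2 := by
    rw [Matrix.frobenius_norm_def, ← Real.rpow_natCast _ 2, ← Real.rpow_mul (by positivity)]
    norm_num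
  rw [h1]
  push_cast
  rw [Finset.sum_comm]
  simp only [Matrix.trace, Matrix.diag, Matrix.mul_apply, Matrix.conjTranspose_apply]
  congr 1; ext j; congr 1; ext i
  have : star (M i j) * M i j = ((Complex.normSq (M i j) : ℝ) : ℂ) := by
    rw [Complex.normSq_eq_conj_mul_self]; rfl
  rw [this]
  norm_cast
  rw [Complex.normSq_eq_norm_sq]

private lemma sos_identity {D : ℕ} (P Q W₃ W₄ : Matrix (Fin D) (Fin D) ℂ)
    (hP : Pᴴ * P = 1) (hQ : Qᴴ * Q = 1) (hW₃ : W₃ * W₃ᴴ = 1) (hW₄ : W₄ * W₄ᴴ = 1)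
    (a b w : ℂ) (ha : conj' a * a = 1/2) (hb : conj' b * b = 1/2)
    (hw : conj' w * w = 1)
    (hx : a * conj' b + b * w * conj' a = 0) :
    2 * (((a•P + b•Q - W₃ᴴ)ᴴ * (a•P + b•Q - W₃ᴴ)).trace
      + (((b*w)•P + a•Q - W₄ᴴ)ᴴ * ((b*w)•P + a•Q - W₄ᴴ)).trace)
    = 8*D - ((a • (P*W₃) + (b*w) • (P*W₄) + b • (Q*W₃) + a • (Q*W₄)
        + a • (W₃*P) + (b*w) • (W₄*P) + b • (W₃*Q) + a • (W₄*Q)).trace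
        + conj' ((a • (P*W₃) + (b*w) • (P*W₄) + b • (Q*W₃) + a • (Q*W₄)
        + a • (W₃*P) + (b*w) • (W₄*P) + b • (W₃*Q) + a • (W₄*Q)).trace)) := by
  have hx' : conj' a * b + conj' b * conj' w * a = 0 := by
    have := congrArg conj' hx
    simpa [mul_comm] using this
  have ct : ∀ M N : Matrix (Fin D) (Fin D) ℂ, conj' ((M*N).trace) = (Mᴴ * Nᴴ).trace := by
    intro M N
    rw [show (conj' ((M*N).trace)) = star ((M*N).trace) from rfl,
      ← Matrix.trace_conjTranspose, Matrix.conjTranspose_mul, Matrix.trace_mul_comm]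
  simp only [Matrix.conjTranspose_add, Matrix.conjTranspose_sub, Matrix.conjTranspose_smul,
    Matrix.conjTranspose_conjTranspose, Matrix.add_mul, Matrix.sub_mul, Matrix.mul_add,
    Matrix.mul_sub, smul_mul_assoc, mul_smul_comm, smul_smul,
    Matrix.trace_add, Matrix.trace_sub, Matrix.trace_smul, smul_eq_mul, map_add, _root_.map_mul,
    Complex.conj_conj, ct, hP, hQ, hW₃, hW₄, Matrix.trace_one]
  rw [Matrix.trace_mul_comm P W₃, Matrix.trace_mul_comm P W₄, Matrix.trace_mul_comm Q W₃,
    Matrix.trace_mul_comm Q W₄, Matrix.trace_mul_comm W₃ᴴ Pᴴ, Matrix.trace_mul_comm W₄ᴴ Pᴴ,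
    Matrix.trace_mul_comm W₃ᴴ Qᴴ, Matrix.trace_mul_comm W₄ᴴ Qᴴ]
  simp only [Fintype.card_fin, starRingEnd_apply, star_mul']
  simp only [starRingEnd_apply] at ha hb hw hx hx'
  set t1 := (Pᴴ*Q).trace with ht1
  set t2 := (Qᴴ*P).trace with ht2
  have h0 : a * star a * (D:ℂ) * 2 + a * star b * t2 + a * star b * t1 * star w +
            star a * t2 * b * w +
          (star a * b * t1 - (D:ℂ) * 2) +
        (D:ℂ) * star b * b +
      (D:ℂ) * star b * b * w * star w = 0 := by
    linear_combination (2*(D:ℂ)) * ha + ((D:ℂ) + (D:ℂ)*(w * star w)) * hb + ((D:ℂ)/2) * hw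
      + t2 * hx + t1 * hx'
  linear_combination 2 * h0

/-- the twisted commutator of the ideal pair vanishes -/
private lemma twist_zero {D : ℕ} (P Q : Matrix (Fin D) (Fin D) ℂ)
    (hP : P * Pᴴ = 1) (hQ : Q * Qᴴ = 1) (a b w : ℂ)
    (hw : w * conj' w = 1) (hab : a * conj' a = b * conj' b) :
    ((b*w)•P + a•Q) * (a•P + b•Q)ᴴ - w • ((a•P + b•Q) * ((b*w)•P + a•Q)ᴴ) = 0 := by
  simp only [Matrix.conjTranspose_add, Matrix.conjTranspose_smul, Matrix.add_mul,
    Matrix.mul_add, smul_mul_assoc, mul_smul_comm, smul_smul, smul_add, hP, hQ]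
  rw [← sub_eq_zero] at hab
  simp only [starRingEnd_apply, star_mul'] at hw hab ⊢
  match_scalars
  · linear_combination (-(star b * a)) * hw
  · linear_combination hab + (-(star b * b)) * hw
  · linear_combination (-w) * hab

private lemma decomp {D : ℕ} (C E B₃ B₄ : Matrix (Fin D) (Fin D) ℂ) (w : ℂ) :
    B₄ * B₃ᴴ - w • (B₃ * B₄ᴴ)
      = (E * Cᴴ - w • (C * Eᴴ))
        + (E * (B₃ - C)ᴴ + (B₄ - E) * Cᴴ + (B₄ - E) * (B₃ - C)ᴴ)
        - w • (C * (B₄ - E)ᴴ + (B₃ - C) * Eᴴ + (B₃ - C) * (B₄ - E)ᴴ) := by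
  simp only [Matrix.conjTranspose_sub, Matrix.mul_sub, Matrix.sub_mul, smul_sub, smul_add]
  abel

private lemma conjTranspose_pow_pred {D d : ℕ} (hd : 1 ≤ d) (U : Matrix (Fin D) (Fin D) ℂ)
    (hU : U ∈ Matrix.unitaryGroup (Fin D) ℂ) (hUd : U ^ d = 1) :
    (U ^ (d-1))ᴴ = U := by
  have h1 : U ^ (d-1) * U = 1 := by rw [← pow_succ, Nat.sub_add_cancel hd, hUd]
  have h2 : (U ^ (d-1))ᴴ * U ^ (d-1) = 1 := by
    have := Matrix.mem_unitaryGroup_iff'.mp (pow_mem hU (d-1))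
    rwa [Matrix.star_eq_conjTranspose] at this
  calc (U ^ (d-1))ᴴ = (U ^ (d-1))ᴴ * (U ^ (d-1) * U) := by rw [h1, mul_one]
  _ = ((U ^ (d-1))ᴴ * U ^ (d-1)) * U := by rw [mul_assoc]
  _ = U := by rw [h2, one_mul]

private lemma family_bound {d D : ℕ} (hd : 2 ≤ d)
    (ω : ℂ) (a : ℕ → ℂ)
    (h1 : ∀ k ∈ Finset.Icc 1 (d-1), conj' (a k) * a k = 1/2)
    (h2 : ∀ k ∈ Finset.Icc 1 (d-1), conj' (ω^k) * ω^k = 1)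
    (h3 : ∀ k ∈ Finset.Icc 1 (d-1), a k * a k + conj' (a k) * ω^k * conj' (a k) = 0)
    (A₁ A₂ A₃ A₄ : Matrix (Fin D) (Fin D) ℂ)
    (hA₁ : A₁ ∈ Matrix.unitaryGroup (Fin D) ℂ) (hA₂ : A₂ ∈ Matrix.unitaryGroup (Fin D) ℂ)
    (hA₃ : A₃ ∈ Matrix.unitaryGroup (Fin D) ℂ) (hA₄ : A₄ ∈ Matrix.unitaryGroup (Fin D) ℂ)
    (β : Matrix (Fin D) (Fin D) ℂ)
    (hβ : β = ∑ k ∈ Finset.Icc 1 (d - 1),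
      (a k • (A₁ ^ k * A₃ ^ (d - k))
        + (conj' (a k) * ω ^ k) • (A₁ ^ k * A₄ ^ (d - k))
        + conj' (a k) • (A₂ ^ k * A₃ ^ (d - k))
        + a k • (A₂ ^ k * A₄ ^ (d - k))
        + a k • (A₃ ^ (d - k) * A₁ ^ k)
        + (conj' (a k) * ω ^ k) • (A₄ ^ (d - k) * A₁ ^ k)
        + conj' (a k) • (A₃ ^ (d - k) * A₂ ^ k)
        + a k • (A₄ ^ (d - k) * A₂ ^ k))) :
    ‖a 1 • A₁ + conj' (a 1) • A₂ - (A₃ ^ (d-1))ᴴ‖^2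
      + ‖(conj' (a 1) * ω) • A₁ + a 1 • A₂ - (A₄ ^ (d-1))ᴴ‖^2
    ≤ 4*((d:ℝ)-1)*D - β.trace.re := by
  set g : ℕ → ℝ := fun k =>
    ‖a k • A₁^k + conj' (a k) • A₂^k - (A₃ ^ (d-k))ᴴ‖^2
      + ‖(conj' (a k) * ω^k) • A₁^k + a k • A₂^k - (A₄ ^ (d-k))ᴴ‖^2 with hg
  have key : ∀ k ∈ Finset.Icc 1 (d-1), 2 * ((g k : ℝ) : ℂ)
      = 8*(D:ℂ) - ((a k • (A₁ ^ k * A₃ ^ (d - k))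
        + (conj' (a k) * ω ^ k) • (A₁ ^ k * A₄ ^ (d - k))
        + conj' (a k) • (A₂ ^ k * A₃ ^ (d - k))
        + a k • (A₂ ^ k * A₄ ^ (d - k))
        + a k • (A₃ ^ (d - k) * A₁ ^ k)
        + (conj' (a k) * ω ^ k) • (A₄ ^ (d - k) * A₁ ^ k)
        + conj' (a k) • (A₃ ^ (d - k) * A₂ ^ k)
        + a k • (A₄ ^ (d - k) * A₂ ^ k)).trace
        + conj' ((a k • (A₁ ^ k * A₃ ^ (d - k))
        + (conj' (a k) * ω ^ k) • (A₁ ^ k * A₄ ^ (d - k))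
        + conj' (a k) • (A₂ ^ k * A₃ ^ (d - k))
        + a k • (A₂ ^ k * A₄ ^ (d - k))
        + a k • (A₃ ^ (d - k) * A₁ ^ k)
        + (conj' (a k) * ω ^ k) • (A₄ ^ (d - k) * A₁ ^ k)
        + conj' (a k) • (A₃ ^ (d - k) * A₂ ^ k)
        + a k • (A₄ ^ (d - k) * A₂ ^ k)).trace)) := by
    intro k hk
    have unit₁ : (A₁^k)ᴴ * A₁^k = 1 := by
      have := Matrix.mem_unitaryGroup_iff'.mp (pow_mem hA₁ k)
      rwa [Matrix.star_eq_conjTranspose] at this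
    have unit₂ : (A₂^k)ᴴ * A₂^k = 1 := by
      have := Matrix.mem_unitaryGroup_iff'.mp (pow_mem hA₂ k)
      rwa [Matrix.star_eq_conjTranspose] at this
    have unit₃ : A₃^(d-k) * (A₃^(d-k))ᴴ = 1 := by
      have := Matrix.mem_unitaryGroup_iff.mp (pow_mem hA₃ (d-k))
      rwa [Matrix.star_eq_conjTranspose] at this
    have unit₄ : A₄^(d-k) * (A₄^(d-k))ᴴ = 1 := by
      have := Matrix.mem_unitaryGroup_iff.mp (pow_mem hA₄ (d-k))
      rwa [Matrix.star_eq_conjTranspose] at this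
    have hb' : conj' (conj' (a k)) * conj' (a k) = 1/2 := by
      rw [Complex.conj_conj, mul_comm]; exact h1 k hk
    have hx : a k * conj' (conj' (a k)) + conj' (a k) * ω^k * conj' (a k) = 0 := by
      rw [Complex.conj_conj]; exact h3 k hk
    have := sos_identity (A₁^k) (A₂^k) (A₃^(d-k)) (A₄^(d-k)) unit₁ unit₂ unit₃ unit₄
      (a k) (conj' (a k)) (ω^k) (h1 k hk) hb' (h2 k hk) hx
    rw [hg]
    rw [frob_trace_eq, frob_trace_eq] at this
    push_cast at this ⊢
    linear_combination this
  have hcard : (Finset.Icc 1 (d-1)).card = d - 1 := by simp [Nat.card_Icc]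
  have hgnonneg : ∀ k ∈ Finset.Icc 1 (d-1), 0 ≤ g k := by
    intro k _; rw [hg]; positivity
  have hsum : ((∑ k ∈ Finset.Icc 1 (d-1), g k : ℝ) : ℂ)
      = 4*((d:ℝ)-1)*(D:ℝ) - β.trace.re := by
    have e1 : (2:ℂ) * ((∑ k ∈ Finset.Icc 1 (d-1), g k : ℝ) : ℂ)
        = ∑ k ∈ Finset.Icc 1 (d-1), (2 * ((g k : ℝ) : ℂ)) := by
      push_cast
      rw [Finset.mul_sum]
    rw [Finset.sum_congr rfl key] at e1
    rw [Finset.sum_sub_distrib, Finset.sum_const, Finset.sum_add_distrib,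
      Finset.sum_add_distrib, ← map_sum, ← Matrix.trace_sum,
      ← hβ, hcard, nsmul_eq_mul] at e1
    have hre : β.trace + conj' β.trace = 2 * (β.trace.re : ℂ) := by
      rw [Complex.add_conj]; push_cast; ring
    have hd1 : ((d - 1 : ℕ) : ℂ) = (d:ℂ) - 1 := by
      push_cast [Nat.cast_sub (by omega : 1 ≤ d)]; ring
    rw [hre, hd1] at e1
    simp only [hg]
    push_cast [Finset.sum_add_distrib] at e1 ⊢
    linear_combination (1/2 : ℂ) * e1
  have h1mem : 1 ∈ Finset.Icc 1 (d-1) := by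
    simp [Finset.mem_Icc]; omega
  have := Finset.single_le_sum hgnonneg h1mem
  have hsumR : (∑ k ∈ Finset.Icc 1 (d-1), g k : ℝ) = 4*((d:ℝ)-1)*D - β.trace.re := by
    have := hsum
    exact_mod_cast this
  rw [hsumR] at this
  refine le_trans ?_ this
  rw [hg]
  simp [pow_one]

section ComplexFacts

private lemma conj_ak {d : ℕ} (a : ℕ → ℂ)
    (ha : ∀ k, a k = ((1 - Complex.I) / 2) * Complex.exp (Real.pi * Complex.I * k / (2 * d)))
    (k : ℕ) :
    conj' (a k) = ((1 + Complex.I) / 2) * Complex.exp (-(Real.pi * Complex.I * k / (2 * d))) := by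
  have hz : conj' ((Real.pi : ℂ) * Complex.I * k / (2 * d))
      = -((Real.pi : ℂ) * Complex.I * k / (2 * d)) := by
    simp [map_div₀, Complex.conj_ofReal, map_ofNat]
    ring
  rw [ha k, _root_.map_mul, ← Complex.exp_conj, hz]
  congr 1
  simp [map_div₀, map_ofNat]

private lemma c1 {d : ℕ} (a : ℕ → ℂ)
    (ha : ∀ k, a k = ((1 - Complex.I) / 2) * Complex.exp (Real.pi * Complex.I * k / (2 * d)))
    (k : ℕ) : conj' (a k) * a k = 1/2 := by
  have he : Complex.exp (-((Real.pi : ℂ) * Complex.I * k / (2 * d)))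
      * Complex.exp ((Real.pi : ℂ) * Complex.I * k / (2 * d)) = 1 := by
    rw [← Complex.exp_add]; simp
  rw [conj_ak a ha k, ha k]
  linear_combination (((1+Complex.I)/2) * ((1-Complex.I)/2)) * he + (-1/4 : ℂ) * Complex.I_sq

private lemma c2 {d : ℕ} (ω : ℂ)
    (hω : ω = Complex.exp (2 * Real.pi * Complex.I / d)) (k : ℕ) :
    conj' (ω ^ k) * ω ^ k = 1 := by
  have h : conj' ω * ω = 1 := by
    rw [hω, ← Complex.exp_conj, ← Complex.exp_add]
    have : conj' (2 * (Real.pi:ℂ) * Complex.I / d) = -(2 * (Real.pi:ℂ) * Complex.I / d) := by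
      simp [map_div₀, Complex.conj_ofReal, map_ofNat]
      ring
    rw [this]
    simp
  rw [map_pow, ← mul_pow, h, one_pow]

private lemma c3 {d : ℕ} (hd : 2 ≤ d) (ω : ℂ)
    (hω : ω = Complex.exp (2 * Real.pi * Complex.I / d)) (a : ℕ → ℂ)
    (ha : ∀ k, a k = ((1 - Complex.I) / 2) * Complex.exp (Real.pi * Complex.I * k / (2 * d)))
    (k : ℕ) : a k * a k + conj' (a k) * ω ^ k * conj' (a k) = 0 := by
  have hd0 : (d : ℂ) ≠ 0 := by
    simp; omega
  have hωk : ω ^ k = Complex.exp ((k:ℂ) * (2 * Real.pi * Complex.I / d)) := by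
    rw [hω, Complex.exp_nat_mul]
  have he : Complex.exp (-((Real.pi : ℂ) * Complex.I * k / (2 * d)))
        * Complex.exp ((k:ℂ) * (2 * Real.pi * Complex.I / d))
        * Complex.exp (-((Real.pi : ℂ) * Complex.I * k / (2 * d)))
      = Complex.exp ((Real.pi : ℂ) * Complex.I * k / (2 * d))
        * Complex.exp ((Real.pi : ℂ) * Complex.I * k / (2 * d)) := by
    rw [← Complex.exp_add, ← Complex.exp_add, ← Complex.exp_add]
    congr 1
    field_simp
    ring
  rw [conj_ak a ha k, ha k, hωk]
  linear_combination (((1+Complex.I)/2)^2) * he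
    + ((Complex.exp ((Real.pi : ℂ) * Complex.I * k / (2 * d))
        * Complex.exp ((Real.pi : ℂ) * Complex.I * k / (2 * d)))/2) * Complex.I_sq

end ComplexFacts

private lemma endgame (e : ℝ) (he : 0 < e) :
    4 * Real.sqrt e + e ≤ 2 * Real.sqrt e * (2 + Real.sqrt e) := by
  have h1 : Real.sqrt e * Real.sqrt e = e := Real.mul_self_sqrt he.le
  nlinarith [he]

private lemma norm_unitary {D : ℕ} (U : Matrix (Fin D) (Fin D) ℂ)
    (hU : U ∈ Matrix.unitaryGroup (Fin D) ℂ) : ‖U‖ = Real.sqrt D := by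
  have hUU : Uᴴ * U = 1 := by
    have := Matrix.mem_unitaryGroup_iff'.mp hU
    rwa [Matrix.star_eq_conjTranspose] at this
  have h : ((‖U‖^2 : ℝ) : ℂ) = (D : ℂ) := by
    rw [← frob_trace_eq, hUU, Matrix.trace_one]
    simp
  have h2 : ‖U‖^2 = (D:ℝ) := by exact_mod_cast h
  rw [← Real.sqrt_sq (norm_nonneg U), h2]


/-- Robustness of the twisted commutation relation: if the ideal observables attain
`Tr[β̂] = 4(d−1)·D` and the non-ideal ones attain `Tr[β̂̃] = (4(d−1)−ε)·D`, then
`(A₄A₃† − ωA₃A₄†)·(𝟙/D)` and its non-ideal version are `2√ε(2+√ε)`-close in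
Hilbert–Schmidt norm. -/
theorem robustness_of_twisted_commutation
    (d D : ℕ) (hd : 2 ≤ d) (hD : 1 ≤ D)
    (ε : ℝ) (hε : 0 < ε)
    (ω : ℂ) (hω : ω = Complex.exp (2 * Real.pi * Complex.I / d))
    (a : ℕ → ℂ)
    (ha : ∀ k, a k = ((1 - Complex.I) / 2) * Complex.exp (Real.pi * Complex.I * k / (2 * d)))
    (A₁ A₂ A₃ A₄ B₁ B₂ B₃ B₄ : Matrix (Fin D) (Fin D) ℂ)
    (hA₁ : A₁ ∈ Matrix.unitaryGroup (Fin D) ℂ)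
    (hA₂ : A₂ ∈ Matrix.unitaryGroup (Fin D) ℂ)
    (hA₃ : A₃ ∈ Matrix.unitaryGroup (Fin D) ℂ)
    (hA₄ : A₄ ∈ Matrix.unitaryGroup (Fin D) ℂ)
    (hB₁ : B₁ ∈ Matrix.unitaryGroup (Fin D) ℂ)
    (hB₂ : B₂ ∈ Matrix.unitaryGroup (Fin D) ℂ)
    (hB₃ : B₃ ∈ Matrix.unitaryGroup (Fin D) ℂ)
    (hB₄ : B₄ ∈ Matrix.unitaryGroup (Fin D) ℂ)
    (hA₁d : A₁ ^ d = 1) (hA₂d : A₂ ^ d = 1) (hA₃d : A₃ ^ d = 1) (hA₄d : A₄ ^ d = 1)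
    (hB₁d : B₁ ^ d = 1) (hB₂d : B₂ ^ d = 1) (hB₃d : B₃ ^ d = 1) (hB₄d : B₄ ^ d = 1)
    (β β' : Matrix (Fin D) (Fin D) ℂ)
    (hβ : β = ∑ k ∈ Finset.Icc 1 (d - 1),
      (a k • (A₁ ^ k * A₃ ^ (d - k))
        + (starRingEnd ℂ (a k) * ω ^ k) • (A₁ ^ k * A₄ ^ (d - k))
        + starRingEnd ℂ (a k) • (A₂ ^ k * A₃ ^ (d - k))
        + a k • (A₂ ^ k * A₄ ^ (d - k))
        + a k • (A₃ ^ (d - k) * A₁ ^ k)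
        + (starRingEnd ℂ (a k) * ω ^ k) • (A₄ ^ (d - k) * A₁ ^ k)
        + starRingEnd ℂ (a k) • (A₃ ^ (d - k) * A₂ ^ k)
        + a k • (A₄ ^ (d - k) * A₂ ^ k)))
    (hβ' : β' = ∑ k ∈ Finset.Icc 1 (d - 1),
      (a k • (B₁ ^ k * B₃ ^ (d - k))
        + (starRingEnd ℂ (a k) * ω ^ k) • (B₁ ^ k * B₄ ^ (d - k))
        + starRingEnd ℂ (a k) • (B₂ ^ k * B₃ ^ (d - k))
        + a k • (B₂ ^ k * B₄ ^ (d - k))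
        + a k • (B₃ ^ (d - k) * B₁ ^ k)
        + (starRingEnd ℂ (a k) * ω ^ k) • (B₄ ^ (d - k) * B₁ ^ k)
        + starRingEnd ℂ (a k) • (B₃ ^ (d - k) * B₂ ^ k)
        + a k • (B₄ ^ (d - k) * B₂ ^ k)))
    (htr : β.trace = ((4 * (d - 1) * D : ℕ) : ℂ))
    (htr' : β'.trace = (((4 * ((d : ℝ) - 1) - ε) * D : ℝ) : ℂ))
    (Y : Matrix (Fin D) (Fin D) ℂ)
    (hY : Y = ((D : ℂ))⁻¹ • (A₄ * A₃ᴴ - ω • (A₃ * A₄ᴴ))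
        - ((D : ℂ))⁻¹ • (B₄ * B₃ᴴ - ω • (B₃ * B₄ᴴ))) :
    Real.sqrt ((Yᴴ * Y).trace.re) ≤ 2 * Real.sqrt ε * (2 + Real.sqrt ε) := by
  have hd1 : (1:ℕ) ≤ d := by omega
  have hD0 : (0:ℝ) < (D:ℝ) := by exact_mod_cast Nat.lt_of_lt_of_le Nat.zero_lt_one hD
  have h1 : ∀ k ∈ Finset.Icc 1 (d-1), conj' (a k) * a k = 1/2 := fun k _ => c1 a ha k
  have h2 : ∀ k ∈ Finset.Icc 1 (d-1), conj' (ω^k) * ω^k = 1 := fun k _ => c2 ω hω k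
  have h3 : ∀ k ∈ Finset.Icc 1 (d-1), a k * a k + conj' (a k) * ω^k * conj' (a k) = 0 :=
    fun k _ => c3 hd ω hω a ha k
  have bndA := family_bound hd ω a h1 h2 h3 A₁ A₂ A₃ A₄ hA₁ hA₂ hA₃ hA₄ β hβ
  have bndB := family_bound hd ω a h1 h2 h3 B₁ B₂ B₃ B₄ hB₁ hB₂ hB₃ hB₄ β' hβ'
  rw [conjTranspose_pow_pred hd1 A₃ hA₃ hA₃d, conjTranspose_pow_pred hd1 A₄ hA₄ hA₄d] at bndA
  rw [conjTranspose_pow_pred hd1 B₃ hB₃ hB₃d, conjTranspose_pow_pred hd1 B₄ hB₄ hB₄d] at bndB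
  have htrA : β.trace.re = 4*((d:ℝ)-1)*(D:ℝ) := by
    rw [htr, Complex.natCast_re]
    push_cast [Nat.cast_sub hd1]
    ring
  have htrB : β'.trace.re = (4*((d:ℝ)-1) - ε)*(D:ℝ) := by
    rw [htr', Complex.ofReal_re]
  rw [htrA] at bndA
  rw [htrB] at bndB
  -- ideal family gives exact relations
  have hA0 : 4*((d:ℝ)-1)*(D:ℝ) - 4*((d:ℝ)-1)*(D:ℝ) = 0 := by ring
  rw [hA0] at bndA
  have hXA : a 1 • A₁ + conj' (a 1) • A₂ - A₃ = 0 := by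
    have hn : ‖a 1 • A₁ + conj' (a 1) • A₂ - A₃‖ = 0 := by
      nlinarith [norm_nonneg (a 1 • A₁ + conj' (a 1) • A₂ - A₃),
        norm_nonneg ((conj' (a 1) * ω) • A₁ + a 1 • A₂ - A₄), bndA,
        sq_nonneg ‖(conj' (a 1) * ω) • A₁ + a 1 • A₂ - A₄‖]
    exact norm_eq_zero.mp hn
  have hYA : (conj' (a 1) * ω) • A₁ + a 1 • A₂ - A₄ = 0 := by
    have hn : ‖(conj' (a 1) * ω) • A₁ + a 1 • A₂ - A₄‖ = 0 := by
      nlinarith [norm_nonneg (a 1 • A₁ + conj' (a 1) • A₂ - A₃),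
        norm_nonneg ((conj' (a 1) * ω) • A₁ + a 1 • A₂ - A₄), bndA,
        sq_nonneg ‖a 1 • A₁ + conj' (a 1) • A₂ - A₃‖]
    exact norm_eq_zero.mp hn
  have hA₃eq : A₃ = a 1 • A₁ + conj' (a 1) • A₂ := (sub_eq_zero.mp hXA).symm
  have hA₄eq : A₄ = (conj' (a 1) * ω) • A₁ + a 1 • A₂ := (sub_eq_zero.mp hYA).symm
  have hunit : ∀ U : Matrix (Fin D) (Fin D) ℂ, U ∈ Matrix.unitaryGroup (Fin D) ℂ →
      U * Uᴴ = 1 := by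
    intro U hU
    have := Matrix.mem_unitaryGroup_iff.mp hU
    rwa [Matrix.star_eq_conjTranspose] at this
  have hw : ω * conj' ω = 1 := by
    have := c2 ω hω 1
    rw [pow_one] at this
    linear_combination this
  have hab : a 1 * conj' (a 1) = conj' (a 1) * conj' (conj' (a 1)) := by
    rw [Complex.conj_conj]; ring
  have hZ : A₄ * A₃ᴴ - ω • (A₃ * A₄ᴴ) = 0 := by
    rw [hA₃eq, hA₄eq]
    exact twist_zero A₁ A₂ (hunit A₁ hA₁) (hunit A₂ hA₂) (a 1) (conj' (a 1)) ω hw hab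
  -- non-ideal side
  have hB0 : 4*((d:ℝ)-1)*(D:ℝ) - (4*((d:ℝ)-1) - ε)*(D:ℝ) = ε * D := by ring
  rw [hB0] at bndB
  set C : Matrix (Fin D) (Fin D) ℂ := a 1 • B₁ + conj' (a 1) • B₂ with hC
  set E : Matrix (Fin D) (Fin D) ℂ := (conj' (a 1) * ω) • B₁ + a 1 • B₂ with hE
  have hZ0 : E * Cᴴ - ω • (C * Eᴴ) = 0 :=
    twist_zero B₁ B₂ (hunit B₁ hB₁) (hunit B₂ hB₂) (a 1) (conj' (a 1)) ω hw hab
  have hdec := decomp C E B₃ B₄ ω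
  rw [hZ0, zero_add] at hdec
  set δ₃ := ‖B₃ - C‖ with hδ₃
  set δ₄ := ‖B₄ - E‖ with hδ₄
  have hδ : δ₃^2 + δ₄^2 ≤ ε * D := by
    rw [hδ₃, hδ₄, norm_sub_rev B₃ C, norm_sub_rev B₄ E]
    exact bndB
  -- norm facts
  have hprod : ∀ (M N : Matrix (Fin D) (Fin D) ℂ), ‖M * Nᴴ‖ ≤ ‖M‖ * ‖N‖ := by
    intro M N
    calc ‖M * Nᴴ‖ ≤ ‖M‖ * ‖Nᴴ‖ := Matrix.frobenius_norm_mul M Nᴴ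
    _ = ‖M‖ * ‖N‖ := by rw [Matrix.frobenius_norm_conjTranspose]
  have hna2 : ‖a 1‖^2 = 1/2 := by
    have hc := c1 a ha 1
    have h' : ((Complex.normSq (a 1) : ℝ) : ℂ) = 1/2 := by
      rw [Complex.normSq_eq_conj_mul_self]; exact hc
    have h'' : Complex.normSq (a 1) = 1/2 := by
      have : ((Complex.normSq (a 1) : ℝ) : ℂ) = (((1:ℝ)/2 : ℝ) : ℂ) := by
        rw [h']; norm_num
      exact_mod_cast this
    rw [Complex.sq_norm, h'']
  have hna : ‖a 1‖ = Real.sqrt (1/2) := by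
    rw [← Real.sqrt_sq (norm_nonneg (a 1)), hna2]
  have hnb : ‖conj' (a 1)‖ = Real.sqrt (1/2) := by
    rw [Complex.norm_conj]; exact hna
  have hω1 : ‖ω‖ = 1 := by
    have hc := c2 ω hω 1
    rw [pow_one] at hc
    have h' : ((Complex.normSq ω : ℝ) : ℂ) = 1 := by
      rw [Complex.normSq_eq_conj_mul_self]; exact hc
    have h'' : Complex.normSq ω = 1 := by
      have : ((Complex.normSq ω : ℝ) : ℂ) = ((1:ℝ) : ℂ) := by
        rw [h']; norm_num
      exact_mod_cast this
    have h3' : ‖ω‖^2 = 1 := by rw [Complex.sq_norm, h'']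
    rw [← Real.sqrt_sq (norm_nonneg ω), h3', Real.sqrt_one]
  set s : ℝ := 2 * Real.sqrt (1/2) * Real.sqrt D with hs
  have hnB₁ : ‖B₁‖ = Real.sqrt D := norm_unitary B₁ hB₁
  have hnB₂ : ‖B₂‖ = Real.sqrt D := norm_unitary B₂ hB₂
  have hCn : ‖C‖ ≤ s := by
    calc ‖C‖ ≤ ‖a 1 • B₁‖ + ‖conj' (a 1) • B₂‖ := norm_add_le _ _
    _ = ‖a 1‖ * ‖B₁‖ + ‖conj' (a 1)‖ * ‖B₂‖ := by rw [norm_smul, norm_smul]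
    _ = s := by rw [hna, hnb, hnB₁, hnB₂, hs]; ring
  have hEn : ‖E‖ ≤ s := by
    calc ‖E‖ ≤ ‖(conj' (a 1) * ω) • B₁‖ + ‖a 1 • B₂‖ := norm_add_le _ _
    _ = ‖conj' (a 1)‖ * ‖ω‖ * ‖B₁‖ + ‖a 1‖ * ‖B₂‖ := by rw [norm_smul, norm_smul, norm_mul]
    _ = s := by rw [hna, hnb, hω1, hnB₁, hnB₂, hs]; ring
  have hZt : ‖B₄ * B₃ᴴ - ω • (B₃ * B₄ᴴ)‖ ≤ 2*s*(δ₃ + δ₄) + 2*(δ₃*δ₄) := by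
    rw [hdec]
    have t1 : ‖E * (B₃ - C)ᴴ‖ ≤ s * δ₃ :=
      le_trans (hprod E (B₃ - C)) (mul_le_mul_of_nonneg_right hEn (norm_nonneg _))
    have t2 : ‖(B₄ - E) * Cᴴ‖ ≤ δ₄ * s := by
      refine le_trans (hprod (B₄ - E) C) ?_
      exact mul_le_mul_of_nonneg_left hCn (norm_nonneg _)
    have t3 : ‖(B₄ - E) * (B₃ - C)ᴴ‖ ≤ δ₄ * δ₃ := hprod (B₄ - E) (B₃ - C)
    have t4 : ‖C * (B₄ - E)ᴴ‖ ≤ s * δ₄ :=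
      le_trans (hprod C (B₄ - E)) (mul_le_mul_of_nonneg_right hCn (norm_nonneg _))
    have t5 : ‖(B₃ - C) * Eᴴ‖ ≤ δ₃ * s := by
      refine le_trans (hprod (B₃ - C) E) ?_
      exact mul_le_mul_of_nonneg_left hEn (norm_nonneg _)
    have t6 : ‖(B₃ - C) * (B₄ - E)ᴴ‖ ≤ δ₃ * δ₄ := hprod (B₃ - C) (B₄ - E)
    calc ‖(E * (B₃ - C)ᴴ + (B₄ - E) * Cᴴ + (B₄ - E) * (B₃ - C)ᴴ)
          - ω • (C * (B₄ - E)ᴴ + (B₃ - C) * Eᴴ + (B₃ - C) * (B₄ - E)ᴴ)‖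
        ≤ ‖E * (B₃ - C)ᴴ + (B₄ - E) * Cᴴ + (B₄ - E) * (B₃ - C)ᴴ‖
          + ‖ω • (C * (B₄ - E)ᴴ + (B₃ - C) * Eᴴ + (B₃ - C) * (B₄ - E)ᴴ)‖ := norm_sub_le _ _
    _ ≤ (‖E * (B₃ - C)ᴴ‖ + ‖(B₄ - E) * Cᴴ‖ + ‖(B₄ - E) * (B₃ - C)ᴴ‖)
          + 1 * (‖C * (B₄ - E)ᴴ‖ + ‖(B₃ - C) * Eᴴ‖ + ‖(B₃ - C) * (B₄ - E)ᴴ‖) := by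
        refine add_le_add (le_trans (norm_add_le _ _)
          (add_le_add (norm_add_le _ _) le_rfl)) ?_
        rw [norm_smul, hω1]
        exact mul_le_mul_of_nonneg_left (le_trans (norm_add_le _ _)
          (add_le_add (norm_add_le _ _) le_rfl)) (by norm_num)
    _ ≤ (s * δ₃ + δ₄ * s + δ₄ * δ₃) + 1 * (s * δ₄ + δ₃ * s + δ₃ * δ₄) := by
        refine add_le_add (add_le_add (add_le_add t1 t2) t3) ?_
        exact mul_le_mul_of_nonneg_left (add_le_add (add_le_add t4 t5) t6) (by norm_num)
    _ = 2*s*(δ₃ + δ₄) + 2*(δ₃*δ₄) := by ring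
  -- numeric endgame
  have hs2 : Real.sqrt (1/2)^2 = 1/2 := Real.sq_sqrt (by norm_num)
  have hsD : Real.sqrt (D:ℝ)^2 = (D:ℝ) := Real.sq_sqrt (le_of_lt hD0)
  have hsε : Real.sqrt ε^2 = ε := Real.sq_sqrt (le_of_lt hε)
  have hsnn : 0 ≤ s := by
    rw [hs]; positivity
  have hsq2 : s^2 = 2 * (D:ℝ) := by rw [hs]; nlinarith [hs2, hsD]
  have hδ₃nn : 0 ≤ δ₃ := norm_nonneg _
  have hδ₄nn : 0 ≤ δ₄ := norm_nonneg _
  clear_value s δ₃ δ₄ C E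
  have key1 : s * (δ₃ + δ₄) ≤ 2 * (D:ℝ) * Real.sqrt ε := by
    have hsq1 : (δ₃ + δ₄)^2 ≤ 2 * (ε * D) := by nlinarith [sq_nonneg (δ₃ - δ₄)]
    have hsq : (s * (δ₃ + δ₄))^2 ≤ (2 * (D:ℝ) * Real.sqrt ε)^2 := by
      calc (s * (δ₃ + δ₄))^2 = s^2 * (δ₃ + δ₄)^2 := by ring
      _ ≤ (2*(D:ℝ)) * (2 * (ε * D)) := by
          exact mul_le_mul hsq2.le hsq1 (sq_nonneg _) (by positivity)
      _ = (2 * (D:ℝ) * Real.sqrt ε)^2 := by rw [mul_pow, mul_pow, hsε]; ring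
    have h := Real.sqrt_le_sqrt hsq
    rwa [Real.sqrt_sq (mul_nonneg hsnn (add_nonneg hδ₃nn hδ₄nn)),
      Real.sqrt_sq (by positivity)] at h
  have key2 : 2*(δ₃*δ₄) ≤ ε * D := by nlinarith [sq_nonneg (δ₃ - δ₄), hδ]
  -- assemble
  have hYeq : Y = -(((D : ℂ))⁻¹ • (B₄ * B₃ᴴ - ω • (B₃ * B₄ᴴ))) := by
    rw [hY, hZ, smul_zero, zero_sub]
  have hYnorm : ‖Y‖ = (D:ℝ)⁻¹ * ‖B₄ * B₃ᴴ - ω • (B₃ * B₄ᴴ)‖ := by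
    rw [hYeq, norm_neg, norm_smul, norm_inv, Complex.norm_natCast]
  have hLHS : Real.sqrt ((Yᴴ * Y).trace.re) = ‖Y‖ := by
    rw [frob_trace_eq Y, Complex.ofReal_re, Real.sqrt_sq (norm_nonneg Y)]
  rw [hLHS, hYnorm]
  have hfin : (D:ℝ)⁻¹ * ‖B₄ * B₃ᴴ - ω • (B₃ * B₄ᴴ)‖
      ≤ (D:ℝ)⁻¹ * (2*(2 * (D:ℝ) * Real.sqrt ε) + ε * D) := by
    refine mul_le_mul_of_nonneg_left ?_ (by positivity)
    refine le_trans hZt ?_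
    linarith [key1, key2]
  refine le_trans hfin ?_
  have hsimp : (D:ℝ)⁻¹ * (2*(2 * (D:ℝ) * Real.sqrt ε) + ε * D)
      = 4 * Real.sqrt ε + ε := by
    field_simp
    ring
  rw [hsimp]
  exact endgame ε hε
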